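/- Let n be a multiple of 6 and let τ, φ be two Hamilton paths of K_n belonging to the same filter class (i.e., as sequences of vertices, φ is obtained from τ by permuting opening pairs among themselves, middle pairs among themselves, and concluding pairs among themselves, preserving the internal order of each glued pair). Then the union of τ and φ contains no 4-cycle that is the union of a subpath of two edges of τ and a subpath of two edges of φ. -/
import Mathlib


/-- The edges of the subpath of the Hamilton path `τ` consisting of the (at most `k`)
consecutive edges starting at position `i`. -/
def consecEdges (n : ℕ) (τ : Equiv.Perm (Fin n)) (i k : ℕ) : Set (Sym2 (Fin n)) :=
  {e | ∃ j : ℕ, ∃ h : j + 1 < n, i ≤ j ∧ j < i + k ∧ e = s(τ ⟨j, by omega⟩, τ ⟨j + 1, h⟩)}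

/-- `C` is the edge set of a cycle of length four. -/
def IsFourCycle (n : ℕ) (C : Set (Sym2 (Fin n))) : Prop :=
  ∃ a b c d : Fin n, a ≠ b ∧ a ≠ c ∧ a ≠ d ∧ b ≠ c ∧ b ≠ d ∧ c ≠ d ∧
    C = {s(a, b), s(b, c), s(c, d), s(d, a)}

/-- The position (in `Fin n`) of the `r`-th element (`r : Fin 2`) of the `p`-th glued pair
of positions `(2p, 2p+1)`. -/
def pairPos (n : ℕ) (p : Fin (n / 2)) (r : Fin 2) : Fin n :=
  ⟨2 * p.val + r.val, by have := p.isLt; have := r.isLt; omega⟩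

/-- Two permutations `τ, φ` of `[n]` (viewed as sequences) are in the same filter class:
`φ` is obtained from `τ` by permuting the glued pairs via a permutation `g` of the pair
indices preserving each pair's role (opening / middle / concluding, i.e. the index mod 3)
and preserving each pair's internal order. -/
def SameFilterClass (n : ℕ) (τ φ : Equiv.Perm (Fin n)) : Prop :=
  ∃ g : Equiv.Perm (Fin (n / 2)),
    (∀ p, (g p).val % 3 = p.val % 3) ∧
    ∀ (p : Fin (n / 2)) (r : Fin 2), φ (pairPos n p r) = τ (pairPos n (g p) r)

/-- Auxiliary: the `k`-th edge of `τ`, with a junk default. -/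
def edgeAt (n : ℕ) (τ : Equiv.Perm (Fin n)) (junk : Sym2 (Fin n)) (k : ℕ) : Sym2 (Fin n) :=
  if h : k + 1 < n then s(τ ⟨k, by omega⟩, τ ⟨k + 1, h⟩) else junk

lemma edgeAt_pos (n : ℕ) (τ : Equiv.Perm (Fin n)) (junk : Sym2 (Fin n)) (k : ℕ)
    (h : k + 1 < n) : edgeAt n τ junk k = s(τ ⟨k, by omega⟩, τ ⟨k + 1, h⟩) := dif_pos h

lemma consecEdges_sub (n : ℕ) (τ : Equiv.Perm (Fin n)) (i : ℕ) (junk : Sym2 (Fin n)) :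
    ∀ e ∈ consecEdges n τ i 2, e = edgeAt n τ junk i ∨ e = edgeAt n τ junk (i + 1) := by
  rintro e ⟨j, h, h1, h2, rfl⟩
  have hj : j = i ∨ j = i + 1 := by omega
  rcases hj with rfl | rfl
  · exact Or.inl (edgeAt_pos n τ junk j h).symm
  · exact Or.inr (edgeAt_pos n τ junk (i+1) h).symm

set_option maxHeartbeats 1000000 in
lemma key4 : ∀ c0 c1 c2 c3 c4 c5 : Fin 4,
    ({s(c0,c1), s(c1,c2), s(c3,c4), s(c4,c5)} : Finset (Sym2 (Fin 4))) =
      {s(0,1), s(1,2), s(2,3), s(3,0)} →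
    c1 ≠ c4 ∧ ((c0 = c3 ∧ c2 = c5) ∨ (c0 = c5 ∧ c2 = c3)) := by decide

lemma vec4_inj {α : Type*} {a b c d : α} (hab : a ≠ b) (hac : a ≠ c) (had : a ≠ d)
    (hbc : b ≠ c) (hbd : b ≠ d) (hcd : c ≠ d) : Function.Injective ![a,b,c,d] := by
  intro u v huv
  fin_cases u <;> fin_cases v <;> first
    | rfl
    | (exfalso; revert huv; simp only [Matrix.cons_val_zero, Matrix.cons_val_one,
        Matrix.head_cons, Matrix.cons_val_two, Matrix.tail_cons, Matrix.cons_val_three]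
       tauto)

lemma endCode {α : Type*} {u v a b c d : α}
    (h : s(u,v) = s(a,b) ∨ s(u,v) = s(b,c) ∨ s(u,v) = s(c,d) ∨ s(u,v) = s(d,a)) :
    ∃ c0 : Fin 4, ![a,b,c,d] c0 = u := by
  have h' : u = a ∨ u = b ∨ u = c ∨ u = d := by
    rcases h with h|h|h|h <;> rw [Sym2.eq_iff] at h <;> tauto
  rcases h' with rfl|rfl|rfl|rfl
  · exact ⟨0, by simp⟩
  · exact ⟨1, by simp⟩
  · exact ⟨2, by simp⟩
  · exact ⟨3, by simp⟩

set_option maxHeartbeats 1600000 in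
/-- If `n` is a multiple of 6 and the Hamilton paths `τ` and `φ` of `K_n` lie in the same
filter class, then their union contains no 4-cycle which is the union of a subpath of two
edges of `τ` and a subpath of two edges of `φ`. -/
theorem no_two_two_four_cycle_in_same_filter_class (n : ℕ) (hn : 6 ∣ n)
    (τ φ : Equiv.Perm (Fin n)) (hclass : SameFilterClass n τ φ) :
    ¬ ∃ C : Set (Sym2 (Fin n)), IsFourCycle n C ∧
        ∃ i j : ℕ, C = consecEdges n τ i 2 ∪ consecEdges n φ j 2 := by
  obtain ⟨g, hg3, hgφ⟩ := hclass
  rintro ⟨C, ⟨a, b, c, d, hab, hac, had, hbc, hbd, hcd, rfl⟩, i, j, hC⟩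
  obtain ⟨m, hm⟩ := hn
  -- the four cycle edges, as a finset
  set junk : Sym2 (Fin n) := s(a, a) with hjunk
  set T : Finset (Sym2 (Fin n)) := {s(a,b), s(b,c), s(c,d), s(d,a)} with hT
  set S : Finset (Sym2 (Fin n)) :=
    {edgeAt n τ junk i, edgeAt n τ junk (i+1), edgeAt n φ junk j, edgeAt n φ junk (j+1)}
    with hS
  have hTsub : T ⊆ S := by
    intro e he
    have heC : e ∈ ({s(a,b), s(b,c), s(c,d), s(d,a)} : Set (Sym2 (Fin n))) := by
      simp only [hT, Finset.mem_insert, Finset.mem_singleton] at he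
      simp only [Set.mem_insert_iff, Set.mem_singleton_iff]
      tauto
    rw [hC] at heC
    rcases heC with h | h
    · rcases consecEdges_sub n τ i junk e h with h' | h' <;>
        simp [hS, h']
    · rcases consecEdges_sub n φ j junk e h with h' | h' <;>
        simp [hS, h']
  have hTcard : T.card = 4 := by
    rw [hT]
    rw [Finset.card_insert_of_notMem (by
      simp only [Finset.mem_insert, Finset.mem_singleton, Sym2.eq_iff]; tauto)]
    rw [Finset.card_insert_of_notMem (by
      simp only [Finset.mem_insert, Finset.mem_singleton, Sym2.eq_iff]; tauto)]
    rw [Finset.card_insert_of_notMem (by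
      simp only [Finset.mem_singleton, Sym2.eq_iff]; tauto)]
    simp
  have hScard : S.card ≤ 4 := by
    refine (Finset.card_insert_le _ _).trans (Nat.succ_le_succ ?_)
    refine (Finset.card_insert_le _ _).trans (Nat.succ_le_succ ?_)
    refine (Finset.card_insert_le _ _).trans (Nat.succ_le_succ ?_)
    simp
  have hTS : T = S := Finset.eq_of_subset_of_card_le hTsub (by omega)
  -- junk is not a cycle edge
  have hjunkT : junk ∉ T := by
    simp only [hT, hjunk, Finset.mem_insert, Finset.mem_singleton, Sym2.eq_iff]
    tauto
  -- bounds
  have hi1 : i + 1 < n := by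
    by_contra h
    apply hjunkT
    rw [hTS]
    have h2 : edgeAt n τ junk i ∈ S := by simp [hS]
    rwa [show edgeAt n τ junk i = junk from dif_neg h] at h2
  have hi2 : i + 2 < n := by
    by_contra h
    apply hjunkT
    rw [hTS]
    have h2 : edgeAt n τ junk (i+1) ∈ S := by simp [hS]
    rwa [show edgeAt n τ junk (i+1) = junk from dif_neg (by omega)] at h2
  have hj1 : j + 1 < n := by
    by_contra h
    apply hjunkT
    rw [hTS]
    have h2 : edgeAt n φ junk j ∈ S := by simp [hS]
    rwa [show edgeAt n φ junk j = junk from dif_neg h] at h2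
  have hj2 : j + 2 < n := by
    by_contra h
    apply hjunkT
    rw [hTS]
    have h2 : edgeAt n φ junk (j+1) ∈ S := by simp [hS]
    rwa [show edgeAt n φ junk (j+1) = junk from dif_neg (by omega)] at h2
  -- name the six vertices
  have hx0lt : i < n := by omega
  have hx2lt : i + 2 < n := hi2
  have hy0lt : j < n := by omega
  have hy2lt : j + 2 < n := hj2
  set x0 : Fin n := τ ⟨i, hx0lt⟩ with hx0
  set x1 : Fin n := τ ⟨i+1, hi1⟩ with hx1
  set x2 : Fin n := τ ⟨i+2, hi2⟩ with hx2
  set y0 : Fin n := φ ⟨j, hy0lt⟩ with hy0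
  set y1 : Fin n := φ ⟨j+1, hj1⟩ with hy1
  set y2 : Fin n := φ ⟨j+2, hj2⟩ with hy2
  have hE1 : edgeAt n τ junk i = s(x0, x1) := dif_pos hi1
  have hE2 : edgeAt n τ junk (i+1) = s(x1, x2) := dif_pos (show i+1+1 < n by omega)
  have hF1 : edgeAt n φ junk j = s(y0, y1) := dif_pos hj1
  have hF2 : edgeAt n φ junk (j+1) = s(y1, y2) := dif_pos (show j+1+1 < n by omega)
  have hsets : T = ({s(x0,x1), s(x1,x2), s(y0,y1), s(y1,y2)} : Finset (Sym2 (Fin n))) := by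
    rw [hTS, hS, hE1, hE2, hF1, hF2]
  -- memberships
  have hm : ∀ e ∈ ({s(x0,x1), s(x1,x2), s(y0,y1), s(y1,y2)} : Finset (Sym2 (Fin n))),
      e = s(a,b) ∨ e = s(b,c) ∨ e = s(c,d) ∨ e = s(d,a) := by
    intro e he
    rw [← hsets] at he
    simpa [hT, Finset.mem_insert, Finset.mem_singleton] using he
  have hm1 := hm s(x0,x1) (Finset.mem_insert_self _ _)
  have hm2 := hm s(x1,x2) (Finset.mem_insert_of_mem (Finset.mem_insert_self _ _))
  have hm3 := hm s(y0,y1)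
    (Finset.mem_insert_of_mem (Finset.mem_insert_of_mem (Finset.mem_insert_self _ _)))
  have hm4 := hm s(y1,y2)
    (Finset.mem_insert_of_mem (Finset.mem_insert_of_mem (Finset.mem_insert_of_mem
      (Finset.mem_singleton_self _))))
  -- codes
  have hκinj : Function.Injective (![a,b,c,d] : Fin 4 → Fin n) :=
    vec4_inj hab hac had hbc hbd hcd
  obtain ⟨c0, hc0⟩ := endCode hm1
  obtain ⟨c1, hc1⟩ := endCode (show s(x1,x0) = s(a,b) ∨ s(x1,x0) = s(b,c) ∨ s(x1,x0) = s(c,d) ∨ s(x1,x0) = s(d,a) by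
    rw [Sym2.eq_swap]; exact hm1)
  obtain ⟨c2, hc2⟩ := endCode (show s(x2,x1) = s(a,b) ∨ s(x2,x1) = s(b,c) ∨ s(x2,x1) = s(c,d) ∨ s(x2,x1) = s(d,a) by
    rw [Sym2.eq_swap]; exact hm2)
  obtain ⟨c3, hc3⟩ := endCode hm3
  obtain ⟨c4, hc4⟩ := endCode (show s(y1,y0) = s(a,b) ∨ s(y1,y0) = s(b,c) ∨ s(y1,y0) = s(c,d) ∨ s(y1,y0) = s(d,a) by
    rw [Sym2.eq_swap]; exact hm3)
  obtain ⟨c5, hc5⟩ := endCode (show s(y2,y1) = s(a,b) ∨ s(y2,y1) = s(b,c) ∨ s(y2,y1) = s(c,d) ∨ s(y2,y1) = s(d,a) by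
    rw [Sym2.eq_swap]; exact hm4)
  -- transfer the finset equality down to Fin 4
  have hfin4 : ({s(c0,c1), s(c1,c2), s(c3,c4), s(c4,c5)} : Finset (Sym2 (Fin 4))) =
      {s(0,1), s(1,2), s(2,3), s(3,0)} := by
    apply Finset.image_injective (Sym2.map.injective hκinj)
    have himg : ∀ (u v : Fin 4) (s : Finset (Sym2 (Fin 4))),
        (insert s(u,v) s).image (Sym2.map (![a,b,c,d] : Fin 4 → Fin n)) =
          insert s(![a,b,c,d] u, ![a,b,c,d] v)
            (s.image (Sym2.map (![a,b,c,d] : Fin 4 → Fin n))) := by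
      intro u v s; rw [Finset.image_insert, Sym2.map_pair_eq]
    rw [himg, himg, himg, Finset.image_singleton, Sym2.map_pair_eq,
        himg, himg, himg, Finset.image_singleton, Sym2.map_pair_eq]
    rw [hc0, hc1, hc2, hc3, hc4, hc5]
    have k0 : (![a,b,c,d] : Fin 4 → Fin n) 0 = a := by simp
    have k1 : (![a,b,c,d] : Fin 4 → Fin n) 1 = b := by simp
    have k2 : (![a,b,c,d] : Fin 4 → Fin n) 2 = c := by simp
    have k3 : (![a,b,c,d] : Fin 4 → Fin n) 3 = d := by simp
    rw [k0, k1, k2, k3]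
    exact hsets.symm.trans (by rw [hT])
  obtain ⟨hne14, hpair⟩ := key4 c0 c1 c2 c3 c4 c5 hfin4
  -- back to vertices
  have hx1y1 : x1 ≠ y1 := by
    intro h
    exact hne14 (hκinj (by rw [hc1, hc4, h]))
  have hends : (x0 = y0 ∧ x2 = y2) ∨ (x0 = y2 ∧ x2 = y0) := by
    rcases hpair with ⟨h1, h2⟩ | ⟨h1, h2⟩
    · left; constructor
      · rw [← hc0, ← hc3, h1]
      · rw [← hc2, ← hc5, h2]
    · right; constructor
      · rw [← hc0, ← hc5, h1]
      · rw [← hc2, ← hc3, h2]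
  -- express φ positions via τ
  have hkey : ∀ (k : ℕ) (hk : k < n) (h2 : k/2 < n/2)
      (hlt : 2 * (g ⟨k/2, h2⟩).val + k % 2 < n),
      φ ⟨k, hk⟩ = τ ⟨2 * (g ⟨k/2, h2⟩).val + k % 2, hlt⟩ := by
    intro k hk h2 hlt
    have step1 : (⟨k, hk⟩ : Fin n) = pairPos n ⟨k/2, h2⟩ ⟨k % 2, by omega⟩ := by
      apply Fin.ext
      simp only [pairPos]
      omega
    rw [step1, hgφ]
    rfl
  have hdiv : (2 : ℕ) ∣ n := by omega
  have hpj : j / 2 < n / 2 := by omega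
  have hpj1 : (j+1) / 2 < n / 2 := by omega
  have hpj2 : (j+2) / 2 < n / 2 := by omega
  set u : ℕ := (g ⟨j/2, hpj⟩).val with hu
  set v : ℕ := (g ⟨(j+1)/2, hpj1⟩).val with hv
  set w : ℕ := (g ⟨(j+2)/2, hpj2⟩).val with hw
  have hu3 : u % 3 = (j/2) % 3 := hg3 _
  have hw3 : w % 3 = ((j+2)/2) % 3 := hg3 _
  have hylt : u < n/2 ∧ v < n/2 ∧ w < n/2 := ⟨(g _).isLt, (g _).isLt, (g _).isLt⟩
  have hy0' : y0 = τ ⟨2 * u + j % 2, by omega⟩ := by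
    rw [hy0]; exact hkey j hy0lt hpj (by omega)
  have hy1' : y1 = τ ⟨2 * v + (j+1) % 2, by omega⟩ := by
    rw [hy1]; exact hkey (j+1) (by omega) hpj1 (by omega)
  have hy2' : y2 = τ ⟨2 * w + (j+2) % 2, by omega⟩ := by
    rw [hy2]; exact hkey (j+2) hy2lt hpj2 (by omega)
  -- link v to u or w depending on parity
  have hvuw : (j % 2 = 0 ∧ v = u) ∨ (j % 2 = 1 ∧ v = w) := by
    rcases Nat.even_or_odd j with hj | hj
    · have hj0 : j % 2 = 0 := Nat.even_iff.1 hj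
      left
      refine ⟨hj0, ?_⟩
      have heq : (⟨(j+1)/2, hpj1⟩ : Fin (n/2)) = ⟨j/2, hpj⟩ := Fin.ext (show (j+1)/2 = j/2 by omega)
      rw [hv, hu, heq]
    · have hj1' : j % 2 = 1 := Nat.odd_iff.1 hj
      right
      refine ⟨hj1', ?_⟩
      have heq : (⟨(j+1)/2, hpj1⟩ : Fin (n/2)) = ⟨(j+2)/2, hpj2⟩ := Fin.ext (show (j+1)/2 = (j+2)/2 by omega)
      rw [hv, hw, heq]
  -- extract index equalities
  have hne : i + 1 ≠ 2 * v + (j+1) % 2 := by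
    intro h
    apply hx1y1
    rw [hx1, hy1']
    congr 1
    exact Fin.ext h
  have hendsnat : (i = 2*u + j % 2 ∧ i + 2 = 2*w + (j+2) % 2) ∨
      (i = 2*w + (j+2) % 2 ∧ i + 2 = 2*u + j % 2) := by
    rcases hends with ⟨h1, h2⟩ | ⟨h1, h2⟩
    · left
      constructor
      · have h' : (⟨i, hx0lt⟩ : Fin n) = ⟨2*u + j % 2, by omega⟩ :=
          τ.injective (hx0.symm.trans (h1.trans hy0'))
        exact congrArg Fin.val h'
      · have h' : (⟨i+2, hi2⟩ : Fin n) = ⟨2*w + (j+2) % 2, by omega⟩ :=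
          τ.injective (hx2.symm.trans (h2.trans hy2'))
        exact congrArg Fin.val h'
    · right
      constructor
      · have h' : (⟨i, hx0lt⟩ : Fin n) = ⟨2*w + (j+2) % 2, by omega⟩ :=
          τ.injective (hx0.symm.trans (h1.trans hy2'))
        exact congrArg Fin.val h'
      · have h' : (⟨i+2, hi2⟩ : Fin n) = ⟨2*u + j % 2, by omega⟩ :=
          τ.injective (hx2.symm.trans (h2.trans hy0'))
        exact congrArg Fin.val h'
  omega
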